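/- arXiv:1707.05619 — 11 statements merged into one kernel-verified Lean document; each statement's English description precedes it below -/
import Mathlib

section
/- Every 2-by-2 GS-game has at least one Nash equilibrium in pure strategies. Formally: consider a game with two players, each with strategy set {s, i}, and suppose each player strictly prefers the outcome of (i,s) over (s,s) when he is the row player, and (s,i) over (s,s) when he is the column player (i.e., both insincere strategies are profitable unilateral deviations from (s,s)). Then the game has a pure Nash equilibrium. -/
/-- Every 2-by-2 GS-game has a pure Nash equilibrium.  Strategies are `Bool`,
with `false` = sincere `s` and `true` = insincere `i`.  Each player has a
total preorder over the four strategy profiles, and each player strictly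
prefers his unilateral insincere deviation from `(s,s)`. -/
theorem stmt0
    (r1 r2 : Bool × Bool → Bool × Bool → Prop)
    (r1_refl : ∀ p, r1 p p)
    (r1_trans : ∀ p q r, r1 p q → r1 q r → r1 p r)
    (r1_total : ∀ p q, r1 p q ∨ r1 q p)
    (r2_refl : ∀ p, r2 p p)
    (r2_trans : ∀ p q r, r2 p q → r2 q r → r2 p r)
    (r2_total : ∀ p q, r2 p q ∨ r2 q p)
    -- player 1 strictly prefers (i,s) to (s,s)
    (h1 : r1 (false, false) (true, false) ∧ ¬ r1 (true, false) (false, false))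
    -- player 2 strictly prefers (s,i) to (s,s)
    (h2 : r2 (false, false) (false, true) ∧ ¬ r2 (false, true) (false, false)) :
    ∃ p : Bool × Bool,
      (∀ a : Bool, ¬ (r1 p (a, p.2) ∧ ¬ r1 (a, p.2) p)) ∧
      (∀ b : Bool, ¬ (r2 p (p.1, b) ∧ ¬ r2 (p.1, b) p)) := by
  by_cases hA : r2 (true, true) (true, false)
  · refine ⟨(true, false), ?_, ?_⟩
    · intro a ⟨_, hn⟩
      cases a
      · exact hn h1.1
      · exact hn (r1_refl _)
    · intro b ⟨_, hn⟩
      cases b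
      · exact hn (r2_refl _)
      · exact hn hA
  · have hA' : r2 (true, false) (true, true) :=
      (r2_total _ _).resolve_left hA
    by_cases hB : r1 (false, true) (true, true)
    · refine ⟨(true, true), ?_, ?_⟩
      · intro a ⟨_, hn⟩
        cases a
        · exact hn hB
        · exact hn (r1_refl _)
      · intro b ⟨_, hn⟩
        cases b
        · exact hn hA'
        · exact hn (r2_refl _)
    · have hB' : r1 (true, true) (false, true) :=
        (r1_total _ _).resolve_left hB
      refine ⟨(false, true), ?_, ?_⟩
      · intro a ⟨_, hn⟩
        cases a
        · exact hn (r1_refl _)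
        · exact hn hB'
      · intro b ⟨_, hn⟩
        cases b
        · exact hn h2.1
        · exact hn (r2_refl _)
end

section
/- Under Plurality with any fixed tie-breaking order, in any profile, every GS-manipulation is of Type 1: if voter i has a GS-manipulation in favour of candidate x (i.e., a vote v' such that the winner of (V_{-i}, v') is x and voter i strictly prefers x to the winner w of V), then x is not the top candidate of voter i's sincere vote, w is not the top candidate of voter i's sincere vote, and the vote obtained from v_i by placing x on top also makes x the winner. -/
def approvalScore {C : Type*} [Fintype C] [DecidableEq C] {n : ℕ} (k : ℕ)
    (V : Fin n → C → ℕ) (c : C) : ℕ :=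
  (Finset.univ.filter fun i => V i c < k).card

def IsWinner {C : Type*} [Fintype C] [DecidableEq C] {n : ℕ} (k : ℕ)
    (V : Fin n → C → ℕ) (tb : C → ℕ) (w : C) : Prop :=
  ∀ c, c ≠ w → approvalScore k V c < approvalScore k V w ∨
    (approvalScore k V c = approvalScore k V w ∧ tb w < tb c)

open scoped Classical in
noncomputable def winner {C : Type*} [Fintype C] [DecidableEq C] [Nonempty C] {n : ℕ} (k : ℕ)
    (V : Fin n → C → ℕ) (tb : C → ℕ) : C :=
  if h : ∃ w, IsWinner k V tb w then h.choose else Classical.arbitrary C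

lemma score_update {C : Type*} [Fintype C] [DecidableEq C] {n : ℕ}
    (V : Fin n → C → ℕ) (i : Fin n) (v : C → ℕ) (c : C) :
    approvalScore 1 (Function.update V i v) c =
      ((Finset.univ.erase i).filter fun j => V j c < 1).card +
        (if v c < 1 then 1 else 0) := by
  classical
  unfold approvalScore
  rw [Finset.card_filter, Finset.card_filter,
    ← Finset.sum_erase_add _ _ (Finset.mem_univ i)]
  congr 1
  · exact Finset.sum_congr rfl fun j hj => by
      rw [Function.update_of_ne (Finset.ne_of_mem_erase hj)]
  · simp


/-- Under Plurality every GS-manipulation is of Type 1: if voter `i` can make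
`x` (whom he strictly prefers to the current winner `w`) win with some vote
`v'`, then neither `x` nor `w` is on top of `i`'s sincere vote, and simply
placing `x` on top of his sincere vote also makes `x` win. -/
theorem stmt2 {C : Type*} [Fintype C] [DecidableEq C] {n : ℕ}
    (V : Fin n → C → ℕ) (hV : ∀ i, Function.Injective (V i))
    (tb : C → ℕ) (htb : Function.Injective tb)
    (w : C) (hw : IsWinner 1 V tb w)
    (i : Fin n) (v' : C → ℕ) (hv' : Function.Injective v')
    (x : C) (hx : IsWinner 1 (Function.update V i v') tb x)
    (hpref : V i x < V i w) :
    V i x ≠ 0 ∧ V i w ≠ 0 ∧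
    IsWinner 1
      (Function.update V i
        (fun c => if c = x then 0 else if V i c = 0 then V i x else V i c))
      tb x := by
  classical
  have hsincere : ∀ c, approvalScore 1 V c =
      ((Finset.univ.erase i).filter fun j => V j c < 1).card +
        (if V i c < 1 then 1 else 0) := by
    intro c
    conv_lhs => rw [← Function.update_eq_self i V]
    rw [score_update]
  have hxw : x ≠ w := fun h => by simp [h] at hpref
  have hwx : w ≠ x := fun h => hxw h.symm
  have hVw : V i w ≠ 0 := by omega
  have hVx : V i x ≠ 0 := by
    by_contra h0
    have h1 := hw x hxw
    have h2 := hx w hwx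
    rw [hsincere, hsincere] at h1
    rw [score_update, score_update] at h2
    rcases h1 with h1 | ⟨h1, htb1⟩ <;> rcases h2 with h2 | ⟨h2, htb2⟩ <;>
      first
        | exact absurd htb2 (lt_asymm htb1)
        | (split_ifs at h1 h2 <;> omega)
  refine ⟨hVx, hVw, ?_⟩
  intro c hc
  have h2 := hx c hc
  rw [score_update, score_update] at h2 ⊢
  have hux : (if True then 0 else if V i x = 0 then V i x else V i x) < 1 := by simp
  have huc : ¬ ((if c = x then 0 else if V i c = 0 then V i x else V i c) < 1) := by
    simp only [if_neg hc]
    split_ifs with h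
    · omega
    · omega
  simp only []
  rw [if_pos hux, if_neg huc]
  rcases h2 with h2 | ⟨h2, htb⟩
  · left
    split_ifs at h2 <;> omega
  · by_cases hlt : ((Finset.univ.erase i).filter fun j => V j c < 1).card + 0 <
        ((Finset.univ.erase i).filter fun j => V j x < 1).card + 1
    · exact Or.inl hlt
    · right
      exact ⟨by split_ifs at h2 <;> omega, htb⟩
end

section
/- Under k-Approval with fixed tie-breaking, let V be a profile with winner w and let x ≠ w. If voter i has a GS-manipulation in favour of x (a vote v' with winner(V_{-i}, v') = x and x ≻_i w), then exactly one of the following holds: (Type 1) both w and x are outside the top k positions of voter i's sincere vote v_i, and the manipulation increases x's score by 1 without decreasing w's score; or (Type 2) both w and x are within the top k positions of v_i, and the manipulation decreases w's score by 1 without increasing x's score. -/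
/-! Only voter `i`'s ballot changes, so every score moves by at most one. As `x` does not beat `w`
before the change and does beat `w` after it, `x` must gain on `w`, which forces `v'` to approve `x`
but not `w`. Since `i` ranks `x` above `w`, the sincere ballot approves either both or neither of
them, and these two cases are Type 2 and Type 1. -/

section

variable {C : Type*} [Fintype C] [DecidableEq C] {n : ℕ} (k : ℕ)

theorem approvalScore_eq_sum_erase_add (V : Fin n → C → ℕ) (i : Fin n) (c : C) :
    approvalScore k V c
      = (∑ j ∈ Finset.univ.erase i, if V j c < k then 1 else 0) + if V i c < k then 1 else 0 := by
  rw [approvalScore, Finset.card_filter, Finset.sum_erase_add _ _ (Finset.mem_univ i)]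

-- stated additively to avoid truncated subtraction
theorem approvalScore_update_add (V : Fin n → C → ℕ) (i : Fin n) (v' : C → ℕ) (c : C) :
    approvalScore k (Function.update V i v') c + (if V i c < k then 1 else 0)
      = approvalScore k V c + if v' c < k then 1 else 0 := by
  have hothers : (∑ j ∈ Finset.univ.erase i, if Function.update V i v' j c < k then 1 else 0)
      = ∑ j ∈ Finset.univ.erase i, if V j c < k then 1 else 0 :=
    Finset.sum_congr rfl fun j hj => by rw [Function.update_of_ne (Finset.ne_of_mem_erase hj)]
  rw [approvalScore_eq_sum_erase_add k _ i, approvalScore_eq_sum_erase_add k V i, hothers,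
    Function.update_self]
  omega

variable {k} {V : Fin n → C → ℕ} {tb : C → ℕ} {w c : C}

theorem IsWinner.approvalScore_le (hw : IsWinner k V tb w) (hc : c ≠ w) :
    approvalScore k V c ≤ approvalScore k V w := by
  rcases hw c hc with h | ⟨h, -⟩ <;> omega

theorem IsWinner.tb_lt_of_approvalScore_eq (hw : IsWinner k V tb w) (hc : c ≠ w)
    (h : approvalScore k V c = approvalScore k V w) : tb w < tb c :=
  ((hw c hc).resolve_left h.not_lt).2

end

theorem stmt3_general {C : Type*} [Fintype C] [DecidableEq C] {n : ℕ} (k : ℕ)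
    (V : Fin n → C → ℕ)
    (tb : C → ℕ)
    (w : C) (hw : IsWinner k V tb w)
    (i : Fin n) (v' : C → ℕ)
    (x : C) (hxw : x ≠ w)
    (hx : IsWinner k (Function.update V i v') tb x)
    (hpref : V i x < V i w) :
    Xor'
      (k ≤ V i w ∧ k ≤ V i x ∧
        approvalScore k (Function.update V i v') x = approvalScore k V x + 1 ∧
        approvalScore k V w ≤ approvalScore k (Function.update V i v') w)
      (V i w < k ∧ V i x < k ∧
        approvalScore k (Function.update V i v') w + 1 = approvalScore k V w ∧
        approvalScore k (Function.update V i v') x ≤ approvalScore k V x) := by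
  have hx_le := hw.approvalScore_le hxw
  have hw_le := hx.approvalScore_le hxw.symm
  -- ties in both profiles would need `tb w < tb x < tb w`
  have hstrict : approvalScore k V x < approvalScore k V w ∨
      approvalScore k (Function.update V i v') w
        < approvalScore k (Function.update V i v') x := by
    by_contra! h
    have := hw.tb_lt_of_approvalScore_eq hxw (by omega)
    have := hx.tb_lt_of_approvalScore_eq hxw.symm (by omega)
    omega
  have hx_change := approvalScore_update_add k V i v' x
  have hw_change := approvalScore_update_add k V i v' w
  refine (xor_iff_or_and_not_and _ _).2 ⟨?_, fun ⟨⟨hw_bot, _⟩, hw_top, _⟩ => hw_bot.not_gt hw_top⟩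
  split_ifs at hx_change hw_change <;> omega

/-- Dichotomy of GS-manipulations under k-Approval: a manipulation `v'` of
voter `i` in favour of `x ≠ w` is of exactly one of two types.
Type 1: both `w` and `x` are outside `top_k` of the sincere vote, the
manipulation raises `x`'s score by one and does not lower `w`'s score.
Type 2: both `w` and `x` are inside `top_k` of the sincere vote, the
manipulation lowers `w`'s score by one and does not raise `x`'s score. -/
theorem stmt3 {C : Type*} [Fintype C] [DecidableEq C] {n : ℕ} (k : ℕ)
    (hk : 1 ≤ k)
    (V : Fin n → C → ℕ) (hV : ∀ i, Function.Injective (V i))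
    (tb : C → ℕ) (htb : Function.Injective tb)
    (w : C) (hw : IsWinner k V tb w)
    (i : Fin n) (v' : C → ℕ) (hv' : Function.Injective v')
    (x : C) (hxw : x ≠ w)
    (hx : IsWinner k (Function.update V i v') tb x)
    (hpref : V i x < V i w) :
    Xor'
      (k ≤ V i w ∧ k ≤ V i x ∧
        approvalScore k (Function.update V i v') x = approvalScore k V x + 1 ∧
        approvalScore k V w ≤ approvalScore k (Function.update V i v') w)
      (V i w < k ∧ V i x < k ∧
        approvalScore k (Function.update V i v') w + 1 = approvalScore k V w ∧
        approvalScore k (Function.update V i v') x ≤ approvalScore k V x) :=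
  stmt3_general k V tb w hw i v' x hxw hx hpref
end

section
/- In any profile V under 2-Approval with fixed tie-breaking, all Type 2 GS-manipulators have the same two top-ranked candidates in the same order; in particular, all Type 2 manipulators manipulate in favour of the same candidate (their common top candidate). -/
/-- Voter `i` is a Type 2 GS-manipulator at `V` (with winner `w`) under
2-Approval: he approves `w`, and he can make a candidate `x` that he approves
and strictly prefers to `w` win by a vote that removes `w` from his approved
set while keeping `x` approved. -/
def IsType2Manipulator {C : Type*} [Fintype C] [DecidableEq C] {n : ℕ}
    (V : Fin n → C → ℕ) (tb : C → ℕ) (w : C) (i : Fin n) : Prop :=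
  V i w < 2 ∧
  ∃ (v' : C → ℕ) (x : C), Function.Injective v' ∧
    V i x < 2 ∧ V i x < V i w ∧ ¬ (v' w < 2) ∧ v' x < 2 ∧
    IsWinner 2 (Function.update V i v') tb x

/-
A Type 2 manipulator `i` ranks some `x` first and `w` second, and after he drops `w`, `x` wins.
No change of `i`'s vote can raise the score of `x`, which `i` already approves, or lower the score
of a candidate `i` does not approve, so `x` already beats at `V` every candidate outside `i`'s top
two. If a second manipulator `j` had a different favourite `y`, then `y` lies outside `i`'s top
two and `x` outside `j`'s (both have `w` second), so `x` would beat `y` and `y` would beat `x`.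
-/

open Function

theorem not_lt_two_of_ne {α : Type*} {f : α → ℕ} (hf : Injective f) {a b c : α} (ha : f a = 0)
    (hb : f b = 1) (hca : c ≠ a) (hcb : c ≠ b) : ¬ f c < 2 := by
  intro hc
  obtain h | h : f c = 0 ∨ f c = 1 := by omega
  · exact hca (hf (h.trans ha.symm))
  · exact hcb (hf (h.trans hb.symm))

section

variable {C : Type*} [Fintype C] [DecidableEq C] {n : ℕ}

/-- `Beats k V tb a b` is `a ⊐_V b` for `k`-Approval with tie-breaking order `tb`. -/
def Beats (k : ℕ) (V : Fin n → C → ℕ) (tb : C → ℕ) (a b : C) : Prop :=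
  approvalScore k V b < approvalScore k V a ∨
    (approvalScore k V b = approvalScore k V a ∧ tb a < tb b)

theorem Beats.not_beats {k : ℕ} {V : Fin n → C → ℕ} {tb : C → ℕ} {a b : C}
    (h : Beats k V tb a b) : ¬ Beats k V tb b a := by
  rcases h with h | ⟨h, h'⟩ <;> rintro (g | ⟨g, g'⟩) <;> omega

theorem Beats.of_approvalScore_le {k : ℕ} {V V' : Fin n → C → ℕ} {tb : C → ℕ} {a b : C}
    (ha : approvalScore k V' a ≤ approvalScore k V a)
    (hb : approvalScore k V b ≤ approvalScore k V' b)
    (h : Beats k V' tb a b) : Beats k V tb a b := by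
  rcases h with h | ⟨h, htb⟩
  · exact Or.inl (by omega)
  · rcases (show approvalScore k V b ≤ approvalScore k V a by omega).lt_or_eq with h' | h'
    · exact Or.inl h'
    · exact Or.inr ⟨h', htb⟩

theorem approvalScore_mono {k : ℕ} {V V' : Fin n → C → ℕ} {c : C}
    (h : ∀ j, V j c < k → V' j c < k) : approvalScore k V c ≤ approvalScore k V' c :=
  Finset.card_le_card fun j => by simpa only [Finset.mem_filter, Finset.mem_univ, true_and] using h j

theorem approvalScore_le_update {k : ℕ} (V : Fin n → C → ℕ) (i : Fin n) (v' : C → ℕ) {c : C}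
    (h : V i c < k → v' c < k) : approvalScore k V c ≤ approvalScore k (update V i v') c :=
  approvalScore_mono fun j => by
    rcases eq_or_ne j i with rfl | hj
    · simpa using h
    · simp [hj]

theorem approvalScore_update_le {k : ℕ} (V : Fin n → C → ℕ) (i : Fin n) (v' : C → ℕ) {c : C}
    (h : v' c < k → V i c < k) : approvalScore k (update V i v') c ≤ approvalScore k V c :=
  approvalScore_mono fun j => by
    rcases eq_or_ne j i with rfl | hj
    · simpa using h
    · simp [hj]

theorem IsType2Manipulator.exists_beats {V : Fin n → C → ℕ} {tb : C → ℕ} {w : C} {i : Fin n}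
    (hi : IsType2Manipulator V tb w i) :
    ∃ x, V i x = 0 ∧ V i w = 1 ∧ ∀ c, ¬ V i c < 2 → c ≠ x → Beats 2 V tb x c := by
  obtain ⟨hiw, v', x, -, hix, hixw, -, -, hwin⟩ := hi
  refine ⟨x, by omega, by omega, fun c hc hcx => ?_⟩
  exact Beats.of_approvalScore_le (approvalScore_update_le V i v' fun _ => hix)
    (approvalScore_le_update V i v' fun h => absurd h hc) (hwin c hcx)

end

theorem stmt5_general {C : Type*} [Fintype C] [DecidableEq C] {n : ℕ}
    (V : Fin n → C → ℕ) (hV : ∀ i, Function.Injective (V i))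
    (tb : C → ℕ)
    (w : C)
    (i j : Fin n)
    (hi : IsType2Manipulator V tb w i)
    (hj : IsType2Manipulator V tb w j) :
    (∀ c, V i c = 0 ↔ V j c = 0) ∧ (∀ c, V i c = 1 ↔ V j c = 1) := by
  obtain ⟨x, hix, hiw, hx⟩ := hi.exists_beats
  obtain ⟨y, hjy, hjw, hy⟩ := hj.exists_beats
  have hxy : x = y := by
    by_contra hxy
    have hxw : x ≠ w := ne_of_apply_ne (V i) (by omega)
    have hyw : y ≠ w := ne_of_apply_ne (V j) (by omega)
    exact (hx y (not_lt_two_of_ne (hV i) hix hiw (Ne.symm hxy) hyw) (Ne.symm hxy)).not_beats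
      (hy x (not_lt_two_of_ne (hV j) hjy hjw hxy hxw) hxy)
  subst hxy
  refine ⟨fun c => ?_, fun c => ?_⟩
  · rw [← hix, (hV i).eq_iff, ← (hV j).eq_iff, hjy, hix]
  · rw [← hiw, (hV i).eq_iff, ← (hV j).eq_iff, hjw, hiw]

/-- Under 2-Approval all Type 2 manipulators have the same two top-ranked
candidates, in the same order. -/
theorem stmt5 {C : Type*} [Fintype C] [DecidableEq C] {n : ℕ}
    (V : Fin n → C → ℕ) (hV : ∀ i, Function.Injective (V i))
    (tb : C → ℕ) (htb : Function.Injective tb)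
    (w : C) (hw : IsWinner 2 V tb w)
    (i j : Fin n)
    (hi : IsType2Manipulator V tb w i)
    (hj : IsType2Manipulator V tb w j) :
    (∀ c, V i c = 0 ↔ V j c = 0) ∧ (∀ c, V i c = 1 ↔ V j c = 1) :=
  stmt5_general V hV tb w i j hi hj
end

section
/- There exists a profile V with 3 voters and 9 candidates under 2-Approval with a fixed tie-breaking order, and a GS-game at V in which each of the two manipulating players has three strategies (sincere plus two manipulations), such that the game has no pure-strategy Nash equilibrium. Concretely: with candidates {a,b,c,d,e,f,n,m,x}, tie-breaking n>a>m>x>b>c>d>e>f, sincere profile v1 = a b | c d e f n m x, v2 = c d | n m x b a e f, v3 = e f | b m x n a c d (top-2 approved shown before the bar), strategies i2 = v2 with {c,d} replaced by {n,m}, i2' = v2 with {c,d} replaced by {n,x}, i3 = v3 with {e,f} replaced by {b,m}, i3' = v3 with {e,f} replaced by {b,x}, the resulting 3-by-3 game (for voters 2 and 3) has winners: (s2,s3)→a, (s2,i3)→b, (s2,i3')→b, (i2,s3)→n, (i2,i3)→m, (i2,i3')→b, (i2',s3)→n, (i2',i3)→b, (i2',i3')→x, and no strategy profile is a Nash equilibrium.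 -/
/- Candidates indexed by the tie-breaking order n>a>m>x>b>c>d>e>f:
   n=0, a=1, m=2, x=3, b=4, c=5, d=6, e=7, f=8.  Votes are position
   functions (candidate ↦ position, 0 = top); top-2 are approved. -/

def s2v : Fin 9 → ℕ := ![2,6,3,4,5,0,1,7,8]   -- c d | n m x b a e f
def s3v : Fin 9 → ℕ := ![5,6,3,4,2,7,8,0,1]   -- e f | b m x n a c d
def i2v : Fin 9 → ℕ := ![0,6,1,4,5,2,3,7,8]   -- v2[cd;nm]
def i2v' : Fin 9 → ℕ := ![0,6,3,1,5,2,4,7,8]  -- v2[cd;nx]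
def i3v : Fin 9 → ℕ := ![5,6,1,4,0,7,8,2,3]   -- v3[ef;bm]
def i3v' : Fin 9 → ℕ := ![5,6,3,1,0,7,8,2,4]  -- v3[ef;bx]

/-- voter 1 is sincere throughout: a b | c d e f n m x -/
def P7 (a b : Fin 9 → ℕ) : Fin 3 → Fin 9 → ℕ := ![![6,0,7,8,1,2,3,4,5], a, b]

def tb9 : Fin 9 → ℕ := fun c => (c : ℕ)


lemma winner_eq_of {C : Type*} [Fintype C] [DecidableEq C] [Nonempty C] {n k : ℕ}
    {V : Fin n → C → ℕ} {tb : C → ℕ} {w : C} (h : IsWinner k V tb w) :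
    winner k V tb = w := by
  have he : ∃ w, IsWinner k V tb w := ⟨w, h⟩
  rw [winner, dif_pos he]
  by_contra hne
  have h1 := h _ hne
  have h2 := he.choose_spec w (Ne.symm hne)
  omega

/-- A 2-Approval GS-game (voters 2 and 3 each have a sincere strategy and two
manipulations) whose winner table is as claimed and which has no
pure-strategy Nash equilibrium. -/
theorem stmt7 :
    IsWinner 2 (P7 s2v s3v) tb9 1 ∧        -- (s2,s3) → a
    IsWinner 2 (P7 s2v i3v) tb9 4 ∧        -- (s2,i3) → b
    IsWinner 2 (P7 s2v i3v') tb9 4 ∧       -- (s2,i3') → b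
    IsWinner 2 (P7 i2v s3v) tb9 0 ∧        -- (i2,s3) → n
    IsWinner 2 (P7 i2v i3v) tb9 2 ∧        -- (i2,i3) → m
    IsWinner 2 (P7 i2v i3v') tb9 4 ∧       -- (i2,i3') → b
    IsWinner 2 (P7 i2v' s3v) tb9 0 ∧       -- (i2',s3) → n
    IsWinner 2 (P7 i2v' i3v) tb9 4 ∧       -- (i2',i3) → b
    IsWinner 2 (P7 i2v' i3v') tb9 3 ∧      -- (i2',i3') → x
    ¬ ∃ a ∈ ({s2v, i2v, i2v'} : Set (Fin 9 → ℕ)),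
        ∃ b ∈ ({s3v, i3v, i3v'} : Set (Fin 9 → ℕ)),
        (∀ a' ∈ ({s2v, i2v, i2v'} : Set (Fin 9 → ℕ)),
          ¬ s2v (winner 2 (P7 a' b) tb9) < s2v (winner 2 (P7 a b) tb9)) ∧
        (∀ b' ∈ ({s3v, i3v, i3v'} : Set (Fin 9 → ℕ)),
          ¬ s3v (winner 2 (P7 a b') tb9) < s3v (winner 2 (P7 a b) tb9)) := by
  have h1 : IsWinner 2 (P7 s2v s3v) tb9 1 := by unfold IsWinner; decide
  have h2 : IsWinner 2 (P7 s2v i3v) tb9 4 := by unfold IsWinner; decide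
  have h3 : IsWinner 2 (P7 s2v i3v') tb9 4 := by unfold IsWinner; decide
  have h4 : IsWinner 2 (P7 i2v s3v) tb9 0 := by unfold IsWinner; decide
  have h5 : IsWinner 2 (P7 i2v i3v) tb9 2 := by unfold IsWinner; decide
  have h6 : IsWinner 2 (P7 i2v i3v') tb9 4 := by unfold IsWinner; decide
  have h7 : IsWinner 2 (P7 i2v' s3v) tb9 0 := by unfold IsWinner; decide
  have h8 : IsWinner 2 (P7 i2v' i3v) tb9 4 := by unfold IsWinner; decide
  have h9 : IsWinner 2 (P7 i2v' i3v') tb9 3 := by unfold IsWinner; decide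
  have w1 := winner_eq_of h1
  have w2 := winner_eq_of h2
  have w3 := winner_eq_of h3
  have w4 := winner_eq_of h4
  have w5 := winner_eq_of h5
  have w6 := winner_eq_of h6
  have w7 := winner_eq_of h7
  have w8 := winner_eq_of h8
  have w9 := winner_eq_of h9
  refine ⟨h1, h2, h3, h4, h5, h6, h7, h8, h9, ?_⟩
  simp only [Set.mem_insert_iff, Set.mem_singleton_iff]
  rintro ⟨a, (rfl | rfl | rfl), b, (rfl | rfl | rfl), ha, hb⟩
  · exact ha i2v (Or.inr (Or.inl rfl)) (by rw [w4, w1]; decide)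
  · exact ha i2v (Or.inr (Or.inl rfl)) (by rw [w5, w2]; decide)
  · exact ha i2v' (Or.inr (Or.inr rfl)) (by rw [w9, w3]; decide)
  · exact hb i3v (Or.inr (Or.inl rfl)) (by rw [w5, w4]; decide)
  · exact hb i3v' (Or.inr (Or.inr rfl)) (by rw [w6, w5]; decide)
  · exact ha i2v' (Or.inr (Or.inr rfl)) (by rw [w9, w6]; decide)
  · exact hb i3v (Or.inr (Or.inl rfl)) (by rw [w8, w7]; decide)
  · exact ha i2v (Or.inr (Or.inl rfl)) (by rw [w5, w8]; decide)
  · exact hb i3v (Or.inr (Or.inl rfl)) (by rw [w8, w9]; decide)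
end

section
/- In any profile V under 3-Approval with fixed tie-breaking, the set of candidates in favour of whom some Type 2 GS-manipulation exists has cardinality at most 2. -/
/-- Some voter has a Type 2 GS-manipulation in favour of `x` at `V` (with
winner `w`) under 3-Approval: he approves both `w` and `x`, prefers `x` to
`w`, and can make `x` win by a vote removing `w` from (and keeping `x` in)
his approved set. -/
def HasType2ManipFor {C : Type*} [Fintype C] [DecidableEq C] {n : ℕ}
    (V : Fin n → C → ℕ) (tb : C → ℕ) (w x : C) : Prop :=
  ∃ (i : Fin n) (v' : C → ℕ), Function.Injective v' ∧
    V i w < 3 ∧ V i x < 3 ∧ V i x < V i w ∧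
    ¬ (v' w < 3) ∧ v' x < 3 ∧
    IsWinner 3 (Function.update V i v') tb x

private lemma score_mono {C : Type*} [Fintype C] [DecidableEq C] {n : ℕ}
    (V : Fin n → C → ℕ) (i : Fin n) (v' : C → ℕ) (c : C) (h : V i c < 3 → v' c < 3) :
    approvalScore 3 V c ≤ approvalScore 3 (Function.update V i v') c := by
  apply Finset.card_le_card
  intro j hj
  simp only [Finset.mem_filter, Finset.mem_univ, true_and] at *
  by_cases hji : j = i
  · subst hji; rw [Function.update_self]; exact h hj
  · rw [Function.update_of_ne hji]; exact hj

private lemma score_anti {C : Type*} [Fintype C] [DecidableEq C] {n : ℕ}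
    (V : Fin n → C → ℕ) (i : Fin n) (v' : C → ℕ) (c : C) (h : v' c < 3 → V i c < 3) :
    approvalScore 3 (Function.update V i v') c ≤ approvalScore 3 V c := by
  apply Finset.card_le_card
  intro j hj
  simp only [Finset.mem_filter, Finset.mem_univ, true_and] at *
  by_cases hji : j = i
  · subst hji; rw [Function.update_self] at hj; exact h hj
  · rw [Function.update_of_ne hji] at hj; exact hj

/-- Key structural lemma: a successfully manipulated-for `x` must `⊐`-beat
(at profile `V`) every candidate other than `w`, itself, and one witness. -/
private lemma key {C : Type*} [Fintype C] [DecidableEq C] {n : ℕ}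
    (V : Fin n → C → ℕ) (hV : ∀ i, Function.Injective (V i))
    (tb : C → ℕ) (w x : C) (hx : HasType2ManipFor V tb w x) :
    x ≠ w ∧ ∃ y, ∀ c, c ≠ w → c ≠ x → c ≠ y →
      (approvalScore 3 V c < approvalScore 3 V x ∨
        (approvalScore 3 V c = approvalScore 3 V x ∧ tb x < tb c)) := by
  classical
  obtain ⟨i, v', _, hiw, hix, hxw, hv'w, hv'x, hwin⟩ := hx
  have hxneW : x ≠ w := fun h => by subst h; omega
  refine ⟨hxneW, ?_⟩
  by_cases hy : ∃ c, c ≠ w ∧ c ≠ x ∧ V i c < 3 ∧ ¬ (v' c < 3)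
  case neg =>
    push_neg at hy
    refine ⟨x, fun c hcw hcx _ => ?_⟩
    have hle : approvalScore 3 V c ≤ approvalScore 3 (Function.update V i v') c :=
      score_mono V i v' c (fun h => hy c hcw hcx h)
    have hxeq : approvalScore 3 V x ≤ approvalScore 3 (Function.update V i v') x :=
      score_mono V i v' x (fun _ => hv'x)
    have hxeq' : approvalScore 3 (Function.update V i v') x ≤ approvalScore 3 V x :=
      score_anti V i v' x (fun _ => hix)
    rcases hwin c hcx with h | ⟨h1, h2⟩
    · left; omega
    · have : approvalScore 3 V c ≤ approvalScore 3 V x := by omega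
      rcases lt_or_eq_of_le this with h' | h'
      · left; exact h'
      · right; exact ⟨h', h2⟩
  case pos =>
    obtain ⟨y, hyw, hyx, hiy, hv'y⟩ := hy
    refine ⟨y, fun c hcw hcx hcy => ?_⟩
    -- c cannot be a fourth approved candidate of voter i, so its score can't drop
    have hcdrop : V i c < 3 → v' c < 3 := by
      intro hic
      by_contra hvc
      -- w, x, y, c all distinct with V i values distinct and < 3 : impossible
      have hcard : ({w, x, y, c} : Finset C).card = 4 := by
        rw [Finset.card_insert_of_notMem (by simp [hxneW.symm, hyw, hcw]; tauto),
          Finset.card_insert_of_notMem (by simp [hyx, hcx]; tauto),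
          Finset.card_insert_of_notMem (by simp [hcy]; tauto)]
        simp
      have himg : ({w, x, y, c} : Finset C).image (V i) ⊆ Finset.range 3 := by
        intro m hm
        simp only [Finset.mem_image, Finset.mem_insert, Finset.mem_singleton] at hm
        obtain ⟨a, ha, rfl⟩ := hm
        rcases ha with rfl | rfl | rfl | rfl <;> simp [Finset.mem_range, *]
      have := Finset.card_le_card himg
      rw [Finset.card_image_of_injective _ (hV i), hcard] at this
      simp at this
    have hle : approvalScore 3 V c ≤ approvalScore 3 (Function.update V i v') c :=
      score_mono V i v' c hcdrop
    have hxeq : approvalScore 3 V x ≤ approvalScore 3 (Function.update V i v') x :=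
      score_mono V i v' x (fun _ => hv'x)
    have hxeq' : approvalScore 3 (Function.update V i v') x ≤ approvalScore 3 V x :=
      score_anti V i v' x (fun _ => hix)
    rcases hwin c hcx with h | ⟨h1, h2⟩
    · left; omega
    · have : approvalScore 3 V c ≤ approvalScore 3 V x := by omega
      rcases lt_or_eq_of_le this with h' | h'
      · left; exact h'
      · right; exact ⟨h', h2⟩

/-- Under 3-Approval, at most 2 candidates admit Type 2 GS-manipulations in
their favour. -/
theorem stmt8 {C : Type*} [Fintype C] [DecidableEq C] {n : ℕ}
    (V : Fin n → C → ℕ) (hV : ∀ i, Function.Injective (V i))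
    (tb : C → ℕ) (htb : Function.Injective tb)
    (w : C) (hw : IsWinner 3 V tb w) :
    {x : C | HasType2ManipFor V tb w x}.ncard ≤ 2 := by
  classical
  set s := fun c => approvalScore 3 V c with hs
  set r := fun a b : C => s b < s a ∨ (s b = s a ∧ tb a < tb b) with hr
  have rasym : ∀ a b, r a b → r b a → False := by
    intro a b h1 h2; simp only [hr] at h1 h2; omega
  have rtrans : ∀ a b c, r a b → r b c → r a c := by
    intro a b c h1 h2; simp only [hr] at h1 h2 ⊢; omega
  by_contra hcon
  push_neg at hcon
  rw [Set.two_lt_ncard (Set.toFinite _)] at hcon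
  obtain ⟨a, ha, b, hb, c, hc, hab, hac, hbc⟩ := hcon
  obtain ⟨haw, ya, hya⟩ := key V hV tb w a ha
  obtain ⟨hbw, yb, hyb⟩ := key V hV tb w b hb
  obtain ⟨hcw, yc, hyc⟩ := key V hV tb w c hc
  -- each of a, b, c `r`-beats at least one of the other two
  have hA : r a b ∨ r a c := by
    by_cases h : ya = b
    · right; exact hya c hcw (Ne.symm hac) (by rw [h]; exact Ne.symm hbc)
    · left; exact hya b hbw (Ne.symm hab) (fun hh => h hh.symm)
  have hB : r b a ∨ r b c := by
    by_cases h : yb = a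
    · right; exact hyb c hcw (Ne.symm hbc) (by rw [h]; exact Ne.symm hac)
    · left; exact hyb a haw hab (fun hh => h hh.symm)
  have hC : r c a ∨ r c b := by
    by_cases h : yc = a
    · right; exact hyc b hbw hbc (by rw [h]; exact Ne.symm hab)
    · left; exact hyc a haw hac (fun hh => h hh.symm)
  rcases hA with h1 | h1
  · rcases hB with h2 | h2
    · exact rasym _ _ h1 h2
    · rcases hC with h3 | h3
      · exact rasym _ _ (rtrans _ _ _ h1 h2) h3
      · exact rasym _ _ h2 h3
  · rcases hC with h3 | h3
    · exact rasym _ _ h1 h3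
    · rcases hB with h2 | h2
      · exact rasym _ _ (rtrans _ _ _ h2 h1) h3
      · exact rasym _ _ h2 h3
end

section
/- Under Plurality, in any 2-voter profile, the only realisable diagram of a 2-by-2 Manipulator/Countermanipulator game is diagram (iii): if voters 1 and 2 have distinct top candidates a and w with w winning by tie-break, voter 1 manipulates in favour of some candidate x by ranking x first (so x beats w on tie-break), and voter 2's best countermanipulation is to rank first some candidate y beating x on tie-break, then y > x > w > a in the tie-breaking order, and when voter 1 votes sincerely while voter 2 plays the countermanipulation, y still wins. -/
lemma score_pair {C : Type*} [Fintype C] [DecidableEq C]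
    (u v : C → ℕ) (c : C) :
    approvalScore 1 ![u, v] c =
      (if u c = 0 then 1 else 0) + (if v c = 0 then 1 else 0) := by
  unfold approvalScore
  rw [Finset.card_filter, Fin.sum_univ_two]
  simp [Nat.lt_one_iff]

lemma top_iff {C : Type*} (u : C → ℕ) (hu : Function.Injective u)
    (t : C) (ht : u t = 0) : ∀ c, u c = 0 ↔ c = t := by
  intro c
  constructor
  · intro h; exact hu (h.trans ht.symm)
  · rintro rfl; exact ht

/-- Under Plurality with two voters, the only realisable 2-by-2
Manipulator/Countermanipulator diagram is (iii): if voter 1's top is `a`,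
voter 2's top is `w ≠ a`, `w` wins sincerely, voter 1 manipulates in favour
of `x` by ranking `x` first, and voter 2 countermanipulates by ranking first
a candidate `y` he prefers to `x`, then `y > x > w > a` in the tie-breaking
order (smaller `tb` = higher priority), and `y` still wins when voter 1
reverts to his sincere vote. -/
theorem stmt10 {C : Type*} [Fintype C] [DecidableEq C]
    (tb : C → ℕ) (htb : Function.Injective tb)
    (v1 v2 m1 m2 : C → ℕ)
    (hv1 : Function.Injective v1) (hv2 : Function.Injective v2)
    (hm1 : Function.Injective m1) (hm2 : Function.Injective m2)
    (a w x y : C)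
    (htop1 : v1 a = 0) (htop2 : v2 w = 0) (haw : a ≠ w)
    (hw : IsWinner 1 ![v1, v2] tb w)
    (hm1x : m1 x = 0)
    (hwx : IsWinner 1 ![m1, v2] tb x)
    (hpref1 : v1 x < v1 w)
    (hm2y : m2 y = 0)
    (hwy : IsWinner 1 ![m1, m2] tb y)
    (hpref2 : v2 y < v2 x) :
    tb y < tb x ∧ tb x < tb w ∧ tb w < tb a ∧
    IsWinner 1 ![v1, m2] tb y := by
  have k1 := top_iff v1 hv1 a htop1
  have k2 := top_iff v2 hv2 w htop2
  have k3 := top_iff m1 hm1 x hm1x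
  have k4 := top_iff m2 hm2 y hm2y
  have hxw : x ≠ w := fun h => absurd hpref1 (by rw [h]; exact lt_irrefl _)
  have hyx : y ≠ x := fun h => absurd hpref2 (by rw [h]; exact lt_irrefl _)
  have hwa : tb w < tb a := by
    rcases hw a haw with h | h
    · exfalso
      rw [score_pair, score_pair] at h
      simp [k1, k2, haw, Ne.symm haw] at h
    · exact h.2
  have hxw' : tb x < tb w := by
    rcases hwx w hxw.symm with h | h
    · exfalso
      rw [score_pair, score_pair] at h
      simp [k3, k2, hxw, Ne.symm hxw] at h
    · exact h.2
  have hyx' : tb y < tb x := by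
    rcases hwy x hyx.symm with h | h
    · exfalso
      rw [score_pair, score_pair] at h
      simp [k3, k4, hyx, Ne.symm hyx] at h
    · exact h.2
  have hya : y ≠ a := by
    intro h
    exact absurd (hyx'.trans (hxw'.trans hwa)) (by rw [h]; exact lt_irrefl _)
  refine ⟨hyx', hxw', hwa, ?_⟩
  intro c hc
  by_cases hca : c = a
  · right
    subst hca
    constructor
    · rw [score_pair, score_pair]
      simp [k1, k4, hc, hya, Ne.symm hya]
    · exact hyx'.trans (hxw'.trans hwa)
  · left
    rw [score_pair, score_pair]
    simp [k1, k4, hc, hca, Ne.symm hya]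
end

section
/- Diagram (i) is realisable by 2-Approval: in the 3-voter profile V = (v1, v2, v3) over candidates including {a, b, c, d, w, x, y, z, t} where v1 = x y w a …, v2 = z t w b …, v3 = c d …, with alphabetic tie-breaking, the 2-Approval winner at V is c; voter 1's manipulation v1* (replacing top-2 {x,y} with {a,w}) makes a the winner; voter 2's manipulation v2* (replacing top-2 {z,t} with {b,w}) makes b the winner; and at (v1*, v2*, v3) the winner is w, which voter 1 prefers to a and voter 2 prefers to b. -/
/- Candidates a=0, b=1, c=2, d=3, w=4, x=5, y=6, z=7, t=8, tie-break by
index.  Votes are position functions: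
  v1 = x y w a b c d z t,  v2 = z t w b a c d x y,  v3 = c d a b w x y z t,
  v1* = v1[xy; aw] = a w y x b c d z t,  v2* = v2[zt; bw] = b w t z a c d x y. -/
def w1 : Fin 9 → ℕ := ![3,4,5,6,2,0,1,7,8]
def w2 : Fin 9 → ℕ := ![4,3,5,6,2,7,8,0,1]
def w3 : Fin 9 → ℕ := ![2,3,0,1,4,5,6,7,8]
def w1m : Fin 9 → ℕ := ![0,4,5,6,1,3,2,7,8]
def w2m : Fin 9 → ℕ := ![4,0,5,6,1,7,8,3,2]

def tb12 : Fin 9 → ℕ := fun c => (c : ℕ)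

/-- Diagram (i) realisable by 2-Approval: `c` wins sincerely; voter 1's
manipulation elects `a`, voter 2's elects `b`, the joint manipulation elects
`w`, which voter 1 prefers to `a` and voter 2 prefers to `b`. -/
theorem stmt12 :
    IsWinner 2 ![w1, w2, w3] tb12 2 ∧
    IsWinner 2 ![w1m, w2, w3] tb12 0 ∧
    IsWinner 2 ![w1, w2m, w3] tb12 1 ∧
    IsWinner 2 ![w1m, w2m, w3] tb12 4 ∧
    w1 4 < w1 0 ∧   -- voter 1: w ≻ a
    w2 4 < w2 1 := by   -- voter 2: w ≻ b
  refine ⟨?_, ?_, ?_, ?_, by decide, by decide⟩ <;> · unfold IsWinner; decide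
end

section
/- In the Plurality profile V = (bacw, cbaw, wbac) with 3 voters and tie-breaking a > w > b > c, the winner at V is w; voter 1's manipulation (placing a on top: abcw) makes a the winner; voter 2's manipulation (placing b on top: bcaw) makes b the winner; if both manipulate simultaneously, a wins; and voter 1 strictly prefers b to a in his sincere ranking, so this realises diagram (v): voter 1 prefers the outcome of (s,i) to both (i,s) and (i,i). -/
/- Candidates a=0, w=1, b=2, c=3; tie-break a > w > b > c (by index).
Profile V = (bacw, cbaw, wbac) as position functions;
voter 1's manipulation m1 = abcw, voter 2's manipulation m2 = bcaw. -/
def V17 : Fin 3 → Fin 4 → ℕ := ![![1,3,0,2], ![2,3,1,0], ![2,0,1,3]]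
def m17a : Fin 4 → ℕ := ![0,3,1,2]
def m17b : Fin 4 → ℕ := ![2,3,0,1]
def tb17 : Fin 4 → ℕ := fun c => (c : ℕ)

/-- Realisation of diagram (v) by Plurality: `w` wins sincerely; voter 1's
manipulation elects `a`, voter 2's elects `b`; if both manipulate, `a` wins;
and voter 1 strictly prefers `b` (the outcome of (s,i)) to `a` (the outcome
of both (i,s) and (i,i)), so he regrets manipulating. -/
theorem stmt17 :
    IsWinner 1 V17 tb17 1 ∧
    IsWinner 1 (Function.update V17 0 m17a) tb17 0 ∧
    IsWinner 1 (Function.update V17 1 m17b) tb17 2 ∧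
    IsWinner 1 (Function.update (Function.update V17 0 m17a) 1 m17b) tb17 0 ∧
    V17 0 2 < V17 0 0 := by   -- voter 1: b ≻ a
  unfold IsWinner; refine ⟨?_, ?_, ?_, ?_, ?_⟩ <;> decide
end

section
/- Under 2-Approval with alphabetic tie-breaking, in the profile V = (xywa…, ztbaw…, cd…) (voter 1 approves {x,y}, ranks w 3rd and a 4th; voter 2 approves {z,t}, ranks b 3rd, a 4th, w 5th; voter 3 approves {c,d}), the winner at V is c; voter 1's manipulation v1* replacing {x,y} with {a,w} makes a win; voter 2's manipulation v2* replacing {z,t} with {b,w} makes b win; and at (v1*, v2*, v3) the winner is w, which voter 1 prefers to a but voter 2 ranks below a and b — realising diagram (vi), in which (i,i) is worse than (i,s) for voter 2. -/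
/- Candidates a=0, b=1, c=2, d=3, w=4, x=5, y=6, z=7, t=8; alphabetic
tie-break by index.  Position-function votes:
  v1 = x y w a b c d z t,  v2 = z t b a w c d x y,  v3 = c d a b w x y z t,
  v1* = v1[xy; aw] = a w y x b c d z t,  v2* = v2[zt; bw] = b w z a t c d x y. -/
def q1 : Fin 9 → ℕ := ![3,4,5,6,2,0,1,7,8]
def q2 : Fin 9 → ℕ := ![3,2,5,6,4,7,8,0,1]
def q3 : Fin 9 → ℕ := ![2,3,0,1,4,5,6,7,8]
def q1m : Fin 9 → ℕ := ![0,4,5,6,1,3,2,7,8]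
def q2m : Fin 9 → ℕ := ![3,0,5,6,1,7,8,2,4]
def tb18 : Fin 9 → ℕ := fun c => (c : ℕ)

/-- Realisation of diagram (vi) by 2-Approval: `c` wins sincerely; voter 1's
manipulation elects `a`, voter 2's elects `b`, the joint manipulation elects
`w`; voter 1 prefers `w` to `a`, but voter 2 ranks `w` below both `a` and
`b`, so voter 2 regrets manipulating at (i,i). -/
theorem stmt18 :
    IsWinner 2 ![q1, q2, q3] tb18 2 ∧
    IsWinner 2 ![q1m, q2, q3] tb18 0 ∧
    IsWinner 2 ![q1, q2m, q3] tb18 1 ∧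
    IsWinner 2 ![q1m, q2m, q3] tb18 4 ∧
    q1 4 < q1 0 ∧   -- voter 1: w ≻ a
    q2 0 < q2 4 ∧   -- voter 2: a ≻ w
    q2 1 < q2 4 := by   -- voter 2: b ≻ w
  refine ⟨?_,?_,?_,?_,?_,?_,?_⟩ <;> first | (unfold IsWinner approvalScore; decide) | decide
end

section
/- For k-Approval with fixed tie-breaking, two votes v and v' of the same voter are equivalent (i.e., give the same winner against every profile of other voters' ballots) if and only if they have the same set of top-k candidates. -/
section Aux

theorem fin_filter_lt_card (n k : ℕ) (h : k ≤ n) :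
    ((Finset.univ : Finset (Fin n)).filter fun i => i.val < k).card = k := by
  have : ((Finset.univ : Finset (Fin n)).filter fun i => i.val < k)
      = Finset.map (Fin.castLEEmb h) Finset.univ := by
    ext i
    simp only [Finset.mem_filter, Finset.mem_univ, true_and, Finset.mem_map]
    constructor
    · intro hi
      exact ⟨⟨i, hi⟩, rfl⟩
    · rintro ⟨j, rfl⟩
      exact j.isLt
  rw [this, Finset.card_map, Finset.card_univ, Fintype.card_fin]

theorem card_topk {C : Type*} [Fintype C] [DecidableEq C] {k : ℕ} (v : C → ℕ)
    (hv : Function.Injective v) (hvb : ∀ c, v c < Fintype.card C)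
    (hk : k ≤ Fintype.card C) :
    (Finset.univ.filter fun c => v c < k).card = k := by
  set m := Fintype.card C with hm
  let f : C → Fin m := fun c => ⟨v c, hvb c⟩
  have hf : Function.Injective f := fun c1 c2 h => hv (congrArg Fin.val h)
  have hfb : Function.Bijective f := by
    rw [Fintype.bijective_iff_injective_and_card]
    exact ⟨hf, by simp [hm]⟩
  have key : (Finset.univ.filter fun c => v c < k).card
      = ((Finset.univ : Finset (Fin m)).filter fun i => i.val < k).card := by
    apply Finset.card_bij (fun c _ => f c)
    · intro c hc
      simp only [Finset.mem_filter, Finset.mem_univ, true_and] at hc ⊢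
      exact hc
    · intro c1 _ c2 _ h
      exact hf h
    · intro j hj
      obtain ⟨c, hc⟩ := hfb.2 j
      refine ⟨c, ?_, hc⟩
      simp only [Finset.mem_filter, Finset.mem_univ, true_and] at hj ⊢
      rw [← hc] at hj
      exact hj
  rw [key, fin_filter_lt_card m k hk]

variable {C : Type*} [Fintype C] [DecidableEq C]

theorem score_snoc {n : ℕ} (k : ℕ) (V : Fin n → C → ℕ) (u : C → ℕ) (c : C) :
    approvalScore k (Fin.snoc V u) c
      = approvalScore k V c + (if u c < k then 1 else 0) := by
  unfold approvalScore
  rw [Finset.card_filter, Finset.card_filter, Fin.sum_univ_castSucc]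
  simp [Fin.snoc_castSucc, Fin.snoc_last]

theorem isWinner_unique {n : ℕ} {k : ℕ} {V : Fin n → C → ℕ} {tb : C → ℕ} {w w' : C}
    (h : IsWinner k V tb w) (h' : IsWinner k V tb w') : w = w' := by
  by_contra hne
  have h1 := h w' (Ne.symm hne)
  have h2 := h' w hne
  omega

theorem winner_eq_of_isWinner [Nonempty C] {n : ℕ} {k : ℕ} {V : Fin n → C → ℕ}
    {tb : C → ℕ} {w : C} (h : IsWinner k V tb w) : winner k V tb = w := by
  have hex : ∃ w, IsWinner k V tb w := ⟨w, h⟩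
  rw [winner, dif_pos hex]
  exact isWinner_unique hex.choose_spec h

theorem winner_congr [Nonempty C] {n : ℕ} {k : ℕ} {V1 V2 : Fin n → C → ℕ} {tb : C → ℕ}
    (h : ∀ c, approvalScore k V1 c = approvalScore k V2 c) :
    winner k V1 tb = winner k V2 tb := by
  have hfun : approvalScore k V1 = approvalScore k V2 := funext h
  unfold winner IsWinner
  rw [hfun]

/-- ballot with `a`, `b` on top (in order given by `s`) and the remaining
candidates rotated by offset `o`. -/
def rotBallot {r : ℕ} (a b : C) (e : {c : C // c ≠ a ∧ c ≠ b} ≃ Fin r)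
    (s : Bool) (o : ℕ) (c : C) : ℕ :=
  if h1 : c = a then (if s then 0 else 1)
  else if h2 : c = b then (if s then 1 else 0)
  else 2 + (((e ⟨c, h1, h2⟩).val + (r - o)) % r)

def rotProfile {r : ℕ} (a b : C) (e : {c : C // c ≠ a ∧ c ≠ b} ≃ Fin r) :
    Fin (2 * r) → C → ℕ :=
  fun i => rotBallot a b e (decide (i.val < r)) (i.val % r)

theorem rotBallot_a {r : ℕ} (a b : C) (e : {c : C // c ≠ a ∧ c ≠ b} ≃ Fin r)
    (s : Bool) (o : ℕ) : rotBallot a b e s o a = if s then 0 else 1 := by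
  simp [rotBallot]

theorem rotBallot_b {r : ℕ} {a b : C} (hab : a ≠ b) (e : {c : C // c ≠ a ∧ c ≠ b} ≃ Fin r)
    (s : Bool) (o : ℕ) : rotBallot a b e s o b = if s then 1 else 0 := by
  simp [rotBallot, Ne.symm hab]

theorem rotBallot_other {r : ℕ} {a b : C} (e : {c : C // c ≠ a ∧ c ≠ b} ≃ Fin r)
    (s : Bool) (o : ℕ) {c : C} (h1 : c ≠ a) (h2 : c ≠ b) :
    rotBallot a b e s o c = 2 + (((e ⟨c, h1, h2⟩).val + (r - o)) % r) := by
  simp [rotBallot, h1, h2]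

theorem rotBallot_inj {r : ℕ} {a b : C} (hab : a ≠ b)
    (e : {c : C // c ≠ a ∧ c ≠ b} ≃ Fin r) (s : Bool) (o : ℕ) :
    Function.Injective (rotBallot a b e s o) := by
  intro c1 c2 h
  by_cases h2a : c2 = a
  · rw [h2a] at h ⊢
    by_cases h1a : c1 = a
    · exact h1a
    by_cases h1b : c1 = b
    · rw [h1b] at h ⊢
      rw [rotBallot_b hab, rotBallot_a] at h
      cases s <;> simp at h <;> omega
    · rw [rotBallot_other e s o h1a h1b, rotBallot_a] at h
      cases s <;> simp at h <;> omega
  by_cases h2b : c2 = b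
  · rw [h2b] at h ⊢
    by_cases h1a : c1 = a
    · rw [h1a] at h ⊢
      rw [rotBallot_a, rotBallot_b hab] at h
      cases s <;> simp at h <;> omega
    by_cases h1b : c1 = b
    · exact h1b
    · rw [rotBallot_other e s o h1a h1b, rotBallot_b hab] at h
      cases s <;> simp at h <;> omega
  by_cases h1a : c1 = a
  · rw [h1a] at h ⊢
    rw [rotBallot_a, rotBallot_other e s o h2a h2b] at h
    cases s <;> simp at h <;> omega
  by_cases h1b : c1 = b
  · rw [h1b] at h ⊢
    rw [rotBallot_b hab, rotBallot_other e s o h2a h2b] at h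
    cases s <;> simp at h <;> omega
  · rw [rotBallot_other e s o h1a h1b, rotBallot_other e s o h2a h2b] at h
    have h' : ((e ⟨c1, h1a, h1b⟩).val + (r - o)) % r
        = ((e ⟨c2, h2a, h2b⟩).val + (r - o)) % r := by omega
    have hmod : Nat.ModEq r ((e ⟨c1, h1a, h1b⟩).val + (r - o))
        ((e ⟨c2, h2a, h2b⟩).val + (r - o)) := h'
    have hmod2 := Nat.ModEq.add_right_cancel' (r - o) hmod
    have hx1 := (e ⟨c1, h1a, h1b⟩).isLt
    have hx2 := (e ⟨c2, h2a, h2b⟩).isLt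
    have hv : (e ⟨c1, h1a, h1b⟩).val = (e ⟨c2, h2a, h2b⟩).val := by
      have h3 : (e ⟨c1, h1a, h1b⟩).val % r = (e ⟨c2, h2a, h2b⟩).val % r := hmod2
      rwa [Nat.mod_eq_of_lt hx1, Nat.mod_eq_of_lt hx2] at h3
    have := e.injective (Fin.ext hv)
    exact congrArg Subtype.val this

theorem rotBallot_lt {r : ℕ} {a b : C} (hab : a ≠ b)
    (e : {c : C // c ≠ a ∧ c ≠ b} ≃ Fin r) (s : Bool) (o : ℕ) (c : C) :
    rotBallot a b e s o c < r + 2 := by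
  by_cases h1 : c = a
  · subst h1; rw [rotBallot_a]; split <;> omega
  by_cases h2 : c = b
  · subst h2; rw [rotBallot_b hab]; split <;> omega
  rw [rotBallot_other e s o h1 h2]
  have hr : 0 < r := (e ⟨c, h1, h2⟩).pos
  have := Nat.mod_lt ((e ⟨c, h1, h2⟩).val + (r - o)) hr
  omega

theorem rotProfile_score_a {r : ℕ} {k : ℕ} (hk1 : 1 ≤ k) {a b : C}
    (e : {c : C // c ≠ a ∧ c ≠ b} ≃ Fin r) :
    approvalScore k (rotProfile a b e) a = if 2 ≤ k then 2 * r else r := by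
  unfold approvalScore rotProfile
  by_cases hk : 2 ≤ k
  · rw [if_pos hk]
    have : ∀ i : Fin (2 * r), rotBallot a b e (decide (i.val < r)) (i.val % r) a < k := by
      intro i
      rw [rotBallot_a]
      split <;> omega
    rw [Finset.filter_true_of_mem (fun i _ => this i), Finset.card_univ, Fintype.card_fin]
  · rw [if_neg hk]
    have hk1' : k = 1 := by omega
    subst hk1'
    have : ∀ i : Fin (2 * r),
        (rotBallot a b e (decide (i.val < r)) (i.val % r) a < 1) = (i.val < r) := by
      intro i
      rw [rotBallot_a]
      by_cases h : i.val < r <;> simp [h]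
    simp only [this]
    exact fin_filter_lt_card (2 * r) r (by omega)

theorem rotProfile_score_b {r : ℕ} {k : ℕ} (hk1 : 1 ≤ k) {a b : C} (hab : a ≠ b)
    (e : {c : C // c ≠ a ∧ c ≠ b} ≃ Fin r) :
    approvalScore k (rotProfile a b e) b = if 2 ≤ k then 2 * r else r := by
  unfold approvalScore rotProfile
  by_cases hk : 2 ≤ k
  · rw [if_pos hk]
    have : ∀ i : Fin (2 * r), rotBallot a b e (decide (i.val < r)) (i.val % r) b < k := by
      intro i
      rw [rotBallot_b hab]
      split <;> omega
    rw [Finset.filter_true_of_mem (fun i _ => this i), Finset.card_univ, Fintype.card_fin]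
  · rw [if_neg hk]
    have hk1' : k = 1 := by omega
    subst hk1'
    have : ∀ i : Fin (2 * r),
        (rotBallot a b e (decide (i.val < r)) (i.val % r) b < 1) = ¬(i.val < r) := by
      intro i
      rw [rotBallot_b hab]
      by_cases h : i.val < r <;> simp [h]
    simp only [this]
    rw [Finset.filter_not, Finset.card_sdiff_of_subset (Finset.filter_subset _ _),
      Finset.card_univ, Fintype.card_fin, fin_filter_lt_card (2 * r) r (by omega)]
    omega

theorem rotProfile_score_other {r : ℕ} {k : ℕ} (hk1 : 1 ≤ k) (hk2 : k ≤ r + 1)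
    {a b : C} (hab : a ≠ b) (e : {c : C // c ≠ a ∧ c ≠ b} ≃ Fin r)
    {c : C} (h1 : c ≠ a) (h2 : c ≠ b) :
    approvalScore k (rotProfile a b e) c < approvalScore k (rotProfile a b e) a := by
  have hr : 0 < r := (e ⟨c, h1, h2⟩).pos
  rw [rotProfile_score_a hk1 e]
  set x := (e ⟨c, h1, h2⟩).val with hx
  have hxlt : x < r := (e ⟨c, h1, h2⟩).isLt
  by_cases hk : 2 ≤ k
  · rw [if_pos hk]
    -- find a voter not approving c
    set i0 : Fin (2 * r) := ⟨(x + 1) % r, lt_of_lt_of_le (Nat.mod_lt _ hr) (by omega)⟩ with hi0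
    have hval : rotProfile a b e i0 c = 2 + (r - 1) := by
      unfold rotProfile
      rw [rotBallot_other e _ _ h1 h2, ← hx]
      congr 1
      have hi0v : (i0 : ℕ) % r = (x + 1) % r := by
        show ((x + 1) % r) % r = (x + 1) % r
        exact Nat.mod_eq_of_lt (Nat.mod_lt _ hr)
      rw [hi0v]
      by_cases hcase : x + 1 < r
      · rw [Nat.mod_eq_of_lt hcase]
        have : x + (r - (x + 1)) = r - 1 := by omega
        rw [this, Nat.mod_eq_of_lt (by omega)]
      · have hxr : x + 1 = r := by omega
        rw [hxr, Nat.mod_self, Nat.sub_zero, Nat.add_mod_right, Nat.mod_eq_of_lt hxlt]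
        omega
    have hnot : ¬ (rotProfile a b e i0 c < k) := by omega
    unfold approvalScore
    have hsub : (Finset.univ.filter fun i => rotProfile a b e i c < k)
        ⊆ Finset.univ.erase i0 := by
      intro j hj
      rw [Finset.mem_filter] at hj
      rw [Finset.mem_erase]
      refine ⟨?_, Finset.mem_univ _⟩
      rintro rfl
      exact hnot hj.2
    calc (Finset.univ.filter fun i => rotProfile a b e i c < k).card
        ≤ (Finset.univ.erase i0).card := Finset.card_le_card hsub
      _ < 2 * r := by
          rw [Finset.card_erase_of_mem (Finset.mem_univ _), Finset.card_univ,
            Fintype.card_fin]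
          omega
  · rw [if_neg hk]
    have hk1' : k = 1 := by omega
    subst hk1'
    have : ∀ i : Fin (2 * r), ¬ (rotProfile a b e i c < 1) := by
      intro i
      unfold rotProfile
      rw [rotBallot_other e _ _ h1 h2]
      omega
    unfold approvalScore
    rw [Finset.filter_false_of_mem (fun i _ => this i)]
    simpa using hr

theorem isWinner_snoc {n k : ℕ} {P : Fin n → C → ℕ} {u : C → ℕ} {tb : C → ℕ} {w z : C}
    (hS : approvalScore k P z = approvalScore k P w)
    (hS2 : ∀ c, c ≠ w → c ≠ z → approvalScore k P c < approvalScore k P w)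
    (hu1 : u w < k) (hu2 : ¬ u z < k) : IsWinner k (Fin.snoc P u) tb w := by
  intro c hc
  left
  rw [score_snoc, score_snoc, if_pos hu1]
  by_cases hz : c = z
  · rw [hz, if_neg hu2]
    omega
  · have := hS2 c hc hz
    split <;> omega

end Aux

/-- Under k-Approval with fixed tie-breaking, two votes `v`, `v'` of the same
voter (rankings, i.e. injective position functions with positions below the
number of candidates) are equivalent — give the same winner against every
profile of other voters' ballots — iff they have the same set of top-k
candidates. -/
theorem stmt19 {C : Type*} [Fintype C] [DecidableEq C] [Nonempty C]
    (k : ℕ) (hk1 : 1 ≤ k) (hk2 : k ≤ Fintype.card C - 1)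
    (tb : C → ℕ) (htb : Function.Injective tb)
    (v v' : C → ℕ)
    (hv : Function.Injective v) (hv' : Function.Injective v')
    (hvb : ∀ c, v c < Fintype.card C) (hv'b : ∀ c, v' c < Fintype.card C) :
    (∀ (n : ℕ) (V : Fin n → C → ℕ),
        (∀ i, Function.Injective (V i) ∧ ∀ c, V i c < Fintype.card C) →
        winner k (Fin.snoc V v) tb = winner k (Fin.snoc V v') tb)
      ↔ (∀ c, v c < k ↔ v' c < k) := by
  have hm1 : 1 ≤ Fintype.card C := Fintype.card_pos
  have hm2 : 2 ≤ Fintype.card C := by omega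
  have hkm : k ≤ Fintype.card C := by omega
  constructor
  · intro H
    by_contra hcon
    push_neg at hcon
    obtain ⟨c0, hc0⟩ := hcon
    set s1 := Finset.univ.filter (fun c => v c < k) with hs1
    set s2 := Finset.univ.filter (fun c => v' c < k) with hs2
    have hcard1 : s1.card = k := card_topk v hv hvb hkm
    have hcard2 : s2.card = k := card_topk v' hv' hv'b hkm
    have hne : s1 ≠ s2 := by
      intro he
      have := Finset.ext_iff.mp he c0
      simp only [hs1, hs2, Finset.mem_filter, Finset.mem_univ, true_and] at this
      rcases hc0 with ⟨h1, h2⟩ | ⟨h1, h2⟩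
      · exact absurd (this.mp h1) (by omega)
      · exact absurd (this.mpr h2) (by omega)
    have hex1 : ∃ a ∈ s1, a ∉ s2 := by
      by_contra hno
      push_neg at hno
      exact hne (Finset.eq_of_subset_of_card_le hno (by omega))
    have hex2 : ∃ b ∈ s2, b ∉ s1 := by
      by_contra hno
      push_neg at hno
      exact hne.symm (Finset.eq_of_subset_of_card_le hno (by omega))
    obtain ⟨a, ha1, ha2⟩ := hex1
    obtain ⟨b, hb1, hb2⟩ := hex2
    simp only [hs1, hs2, Finset.mem_filter, Finset.mem_univ, true_and] at ha1 ha2 hb1 hb2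
    have hab : a ≠ b := by
      rintro rfl
      exact hb2 ha1
    have hD : Fintype.card {c : C // c ≠ a ∧ c ≠ b} = Fintype.card C - 2 := by
      rw [Fintype.card_subtype]
      have hfe : (Finset.univ.filter fun c => c ≠ a ∧ c ≠ b)
          = Finset.univ \ {a, b} := by
        ext c
        simp only [Finset.mem_filter, Finset.mem_univ, true_and, Finset.mem_sdiff,
          Finset.mem_insert, Finset.mem_singleton, not_or]
      rw [hfe, Finset.card_sdiff_of_subset (Finset.subset_univ _), Finset.card_univ,
        Finset.card_insert_of_notMem (by simp [hab]), Finset.card_singleton]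
    let e := Fintype.equivFinOfCardEq hD
    have hk2' : k ≤ (Fintype.card C - 2) + 1 := by omega
    have hHyp : ∀ i : Fin (2 * (Fintype.card C - 2)),
        Function.Injective (rotProfile a b e i) ∧
          ∀ c, rotProfile a b e i c < Fintype.card C := by
      intro i
      refine ⟨rotBallot_inj hab e _ _, fun c => ?_⟩
      have := rotBallot_lt hab e (decide (i.val < Fintype.card C - 2))
        (i.val % (Fintype.card C - 2)) c
      have h2 : rotProfile a b e i c = rotBallot a b e
        (decide (i.val < Fintype.card C - 2)) (i.val % (Fintype.card C - 2)) c := rfl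
      omega
    have hkey := H (2 * (Fintype.card C - 2)) (rotProfile a b e) hHyp
    have hSab : approvalScore k (rotProfile a b e) b
        = approvalScore k (rotProfile a b e) a := by
      rw [rotProfile_score_b hk1 hab e, rotProfile_score_a hk1 e]
    have hw1 : winner k (Fin.snoc (rotProfile a b e) v) tb = a := by
      apply winner_eq_of_isWinner
      exact isWinner_snoc hSab
        (fun c h1 h2 => rotProfile_score_other hk1 hk2' hab e h1 h2) ha1 hb2
    have hw2 : winner k (Fin.snoc (rotProfile a b e) v') tb = b := by
      apply winner_eq_of_isWinner
      exact isWinner_snoc hSab.symm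
        (fun c h1 h2 => by
          rw [hSab]
          exact rotProfile_score_other hk1 hk2' hab e h2 h1) hb1 ha2
    rw [hw1, hw2] at hkey
    exact hab hkey
  · intro hsets n V hV
    apply winner_congr
    intro c
    rw [score_snoc, score_snoc]
    simp only [hsets c]
end
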